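/- Define U(x,y) = (1/4)·(x choose y)^4 · ((x-y+1)(y+1)/((x+1)(x+2)))^{2x-3}. Then U(x,y) ≤ 1 for all integers x ≥ y ≥ 0 with (x,y) not in {(2,1),(0,0),(1,0),(1,1)}. -/

import Mathlib

/-!
For `x ≥ 2` the exponent is the natural number `n = 2x - 3`. By AM-GM the base is at most
`(1 + 1/(x+1))/4`, and `(1 + 1/(x+1))^n ≤ e²`. The sharpened central binomial bound
`(3m+1)·C(2m,m)² ≤ 16^m` gives `C(x,y)⁴ ≤ 4·16^x/(3x+2)²`, and `16^x = 64·4^n`, so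
`U(x,y) ≤ 64e²/(3x+2)²`, which is below `1` once `x ≥ 7`. The remaining pairs are evaluated.
-/

theorem Nat.centralBinom_succ_eq_two_mul_choose (n : ℕ) :
    (n + 1).centralBinom = 2 * (2 * n + 1).choose n := by
  rw [Nat.centralBinom_eq_two_mul_choose, show 2 * (n + 1) = 2 * n + 1 + 1 by ring,
    Nat.choose_succ_succ', Nat.choose_symm_half, ← two_mul]

theorem Nat.three_mul_add_one_mul_centralBinom_sq_le (n : ℕ) :
    (3 * n + 1) * n.centralBinom ^ 2 ≤ 16 ^ n := by
  induction n with
  | zero => simp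
  | succ n ih =>
    have hrec := Nat.succ_mul_centralBinom_succ n
    refine Nat.le_of_mul_le_mul_left ?_ (by positivity : 0 < (n + 1) ^ 2)
    calc (n + 1) ^ 2 * ((3 * (n + 1) + 1) * (n + 1).centralBinom ^ 2)
        = (3 * n + 4) * ((n + 1) * (n + 1).centralBinom) ^ 2 := by ring
      _ = (3 * n + 4) * (2 * (2 * n + 1)) ^ 2 * n.centralBinom ^ 2 := by rw [hrec]; ring
      _ ≤ 16 * (n + 1) ^ 2 * (3 * n + 1) * n.centralBinom ^ 2 := by
          gcongr ?_ * _; nlinarith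
      _ ≤ 16 * (n + 1) ^ 2 * 16 ^ n := by rw [mul_assoc _ (3 * n + 1)]; gcongr
      _ = (n + 1) ^ 2 * 16 ^ (n + 1) := by ring

theorem Nat.sq_mul_choose_half_pow_four_le (n : ℕ) :
    (3 * n + 2) ^ 2 * n.choose (n / 2) ^ 4 ≤ 4 * 16 ^ n := by
  obtain ⟨m, rfl | rfl⟩ := Nat.even_or_odd' n
  · have h := Nat.three_mul_add_one_mul_centralBinom_sq_le m
    rw [Nat.mul_div_cancel_left m two_pos, ← Nat.centralBinom_eq_two_mul_choose]
    calc (3 * (2 * m) + 2) ^ 2 * m.centralBinom ^ 4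
        = 4 * ((3 * m + 1) * m.centralBinom ^ 2) ^ 2 := by ring
      _ ≤ 4 * 16 ^ (2 * m) := by rw [pow_mul']; gcongr
  · have h := Nat.three_mul_add_one_mul_centralBinom_sq_le (m + 1)
    rw [Nat.centralBinom_succ_eq_two_mul_choose] at h
    rw [show (2 * m + 1) / 2 = m by omega]
    refine Nat.le_of_mul_le_mul_left ?_ (by norm_num : 0 < 4)
    calc 4 * ((3 * (2 * m + 1) + 2) ^ 2 * (2 * m + 1).choose m ^ 4)
        ≤ 4 * ((2 * (3 * (m + 1) + 1)) ^ 2 * (2 * m + 1).choose m ^ 4) := by gcongr; omega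
      _ = ((3 * (m + 1) + 1) * (2 * (2 * m + 1).choose m) ^ 2) ^ 2 := by ring
      _ ≤ (16 ^ (m + 1)) ^ 2 := by gcongr
      _ = 4 * (4 * 16 ^ (2 * m + 1)) := by ring

theorem Nat.sq_mul_choose_pow_four_le (n k : ℕ) :
    (3 * n + 2) ^ 2 * n.choose k ^ 4 ≤ 4 * 16 ^ n :=
  le_trans (by gcongr; exact Nat.choose_le_middle k n) (Nat.sq_mul_choose_half_pow_four_le n)

theorem Real.one_add_inv_pow_le_exp_of_le_mul {k m n : ℕ} (h : n ≤ m * k) :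
    (1 + (m : ℝ)⁻¹) ^ n ≤ Real.exp k := calc
  (1 + (m : ℝ)⁻¹) ^ n ≤ (1 + (m : ℝ)⁻¹) ^ (m * k) :=
    pow_le_pow_right₀ (le_add_of_nonneg_right (by positivity)) h
  _ ≤ Real.exp 1 ^ k := by rw [pow_mul]; gcongr; exact Real.one_add_inv_pow_le_exp
  _ = Real.exp k := by rw [← Real.exp_nat_mul, mul_one]

noncomputable section

/-- `U(x,y) = (1/4)·(x choose y)⁴ · ((x-y+1)(y+1)/((x+1)(x+2)))^(2x-3)`,
where the possibly negative exponent `2x-3` is interpreted as a real power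
of a positive rational. -/
def Ufun (x y : ℕ) : ℝ :=
  (1 / 4) * (x.choose y : ℝ) ^ 4 *
    (((((x : ℝ) - (y : ℝ) + 1) * ((y : ℝ) + 1)) /
        (((x : ℝ) + 1) * ((x : ℝ) + 2))) ^ (2 * (x : ℝ) - 3))

def UfunBase (x y : ℕ) : ℝ :=
  (((x : ℝ) - (y : ℝ) + 1) * ((y : ℝ) + 1)) / (((x : ℝ) + 1) * ((x : ℝ) + 2))

theorem Ufun_eq_pow (x y : ℕ) (hx : 2 ≤ x) :
    Ufun x y = 1 / 4 * (x.choose y : ℝ) ^ 4 * UfunBase x y ^ (2 * x - 3) := by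
  rw [Ufun, UfunBase, ← Real.rpow_natCast _ (2 * x - 3), Nat.cast_sub (by omega)]
  push_cast
  rfl

theorem UfunBase_nonneg {x y : ℕ} (hxy : y ≤ x) : 0 ≤ UfunBase x y := by
  have : (y : ℝ) ≤ x := by exact_mod_cast hxy
  unfold UfunBase
  apply div_nonneg <;> nlinarith

theorem UfunBase_le (x y : ℕ) : UfunBase x y ≤ (1 + ((x : ℝ) + 1)⁻¹) / 4 := by
  have amgm := four_mul_le_sq_add ((x : ℝ) - y + 1) (y + 1)
  rw [UfunBase, div_le_iff₀ (by positivity)]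
  field_simp
  nlinarith

theorem Ufun_le_one_of_seven_le {x y : ℕ} (hxy : y ≤ x) (hx : 7 ≤ x) : Ufun x y ≤ 1 := by
  set n := 2 * x - 3
  set a : ℝ := 1 + ((x : ℝ) + 1)⁻¹
  have hchoose : (3 * x + 2 : ℝ) ^ 2 * (x.choose y : ℝ) ^ 4 ≤ 4 * 16 ^ x := by
    exact_mod_cast Nat.sq_mul_choose_pow_four_le x y
  have hpow : a ^ n ≤ Real.exp 2 := by
    have h := Real.one_add_inv_pow_le_exp_of_le_mul (k := 2) (m := x + 1) (n := n) (by omega)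
    push_cast at h
    exact h
  have hsixteen : (16 : ℝ) ^ x = 64 * 4 ^ n := by
    rw [show (16 : ℝ) = 4 ^ 2 by norm_num, ← pow_mul, show 2 * x = n + 3 by omega, pow_add]
    norm_num [mul_comm]
  have hexp : 64 * Real.exp 2 ≤ (3 * x + 2 : ℝ) ^ 2 := by
    have : (7 : ℝ) ≤ x := by exact_mod_cast hx
    have := Real.exp_one_lt_d9
    rw [show (2 : ℝ) = 1 + 1 by norm_num, Real.exp_add]
    nlinarith [Real.exp_pos 1]
  rw [Ufun_eq_pow x y (by omega)]
  calc 1 / 4 * (x.choose y : ℝ) ^ 4 * UfunBase x y ^ n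
      ≤ 1 / 4 * (x.choose y : ℝ) ^ 4 * (a / 4) ^ n := by
        gcongr
        exacts [UfunBase_nonneg hxy, UfunBase_le x y]
    _ = (3 * x + 2 : ℝ) ^ 2 * (x.choose y : ℝ) ^ 4 * a ^ n / (4 * 4 ^ n * (3 * x + 2) ^ 2) := by
        rw [div_pow]; field_simp
    _ ≤ 4 * 16 ^ x * Real.exp 2 / (4 * 4 ^ n * (3 * x + 2) ^ 2) := by gcongr
    _ = 64 * Real.exp 2 / (3 * x + 2) ^ 2 := by rw [hsixteen]; field_simp
    _ ≤ 1 := by rwa [div_le_one (by positivity)]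

/-- `U(x,y) ≤ 1` for all integers `x ≥ y ≥ 0` with
`(x,y) ∉ {(2,1),(0,0),(1,0),(1,1)}`. -/
theorem Ufun_le_one (x y : ℕ) (hxy : y ≤ x)
    (h1 : ¬ (x = 2 ∧ y = 1)) (h2 : ¬ (x = 0 ∧ y = 0))
    (h3 : ¬ (x = 1 ∧ y = 0)) (h4 : ¬ (x = 1 ∧ y = 1)) :
    Ufun x y ≤ 1 := by
  rcases le_or_gt x 6 with hx | hx
  · interval_cases x <;> interval_cases y <;>
      first
        | omega
        | (rw [Ufun_eq_pow _ _ (by norm_num)]; norm_num [UfunBase, Nat.choose])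
  · exact Ufun_le_one_of_seven_le hxy hx
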